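/- (Proposition) Let X_1, X_2, … be i.i.d. random variables with distribution N(0,1). Then, almost surely, the posterior probability p(T_n = 1 | X_1,…,X_n) under the standard normal Dirichlet process mixture with concentration parameter α = 1 does not converge to 1 as n → ∞; indeed, almost surely, limsup_{n→∞} p(T_n = 1 | X_1,…,X_n) ≤ 1 / (1 + 1/(2√2)) < 1. -/

import Mathlib

open MeasureTheory Filter Finset

/-- The standard normal density `φ(u) = (2π)^{-1/2} exp(-u²/2)`. -/
noncomputable def stdNormalPDF (u : ℝ) : ℝ :=
  (Real.sqrt (2 * Real.pi))⁻¹ * Real.exp (-u ^ 2 / 2)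

/-- The single-cluster marginal `m(x_S)` of a unit-variance normal component with
standard normal prior on the mean, in closed form. -/
noncomputable def clusterMarginal {n : ℕ} (x : Fin n → ℝ) (S : Finset (Fin n)) : ℝ :=
  (Real.sqrt (S.card + 1))⁻¹ * (∏ j ∈ S, stdNormalPDF (x j)) *
    Real.exp ((∑ j ∈ S, x j) ^ 2 / (2 * (S.card + 1)))

/-- The set `𝒜_t(n)` of ordered partitions `(A_1, …, A_t)` of `{1,…,n}` into `t`
nonempty disjoint sets. -/
def orderedPartitions (n t : ℕ) : Finset (Fin t → Finset (Fin n)) :=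
  Finset.univ.filter fun A =>
    (∀ i, (A i).Nonempty) ∧ (∀ i j, i ≠ j → Disjoint (A i) (A j)) ∧
      Finset.univ.biUnion A = Finset.univ

/-- The CRP (α = 1) weight `p(A) = (1/(n!·t!)) ∏_i (|A_i| - 1)!` of an ordered partition
of `{1,…,n}` into `t` parts. -/
noncomputable def crpWeight {n t : ℕ} (A : Fin t → Finset (Fin n)) : ℝ :=
  (1 / ((n.factorial : ℝ) * (t.factorial : ℝ))) * ∏ i, (((A i).card - 1).factorial : ℝ)

/-- The joint law of the data and the number of clusters under the standard normal DPM
with concentration parameter `α = 1`: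
`p(x, T_n = t) = ∑_{A ∈ 𝒜_t(n)} p(A) ∏_i m(x_{A_i})`. -/
noncomputable def pJoint (n t : ℕ) (x : Fin n → ℝ) : ℝ :=
  ∑ A ∈ orderedPartitions n t, crpWeight A * ∏ i, clusterMarginal x (A i)

/-- The posterior probability of one cluster,
`p(T_n = 1 | x) = p(x, T_n = 1) / ∑_{t=1}^n p(x, T_n = t)`. -/
noncomputable def posteriorOne (n : ℕ) (x : Fin n → ℝ) : ℝ :=
  pJoint n 1 x / ∑ t ∈ Finset.Icc 1 n, pJoint n t x

/-! The posterior odds of two clusters against one are bounded below using only the partitions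
that split off a single point. Completing the square shows that each such split has marginal at
least `exp (-x̄²) / √2` times the one-cluster marginal, `x̄` the sample mean, and with the CRP
weights the `n` splits together give `p(x, T_n = 2) ≥ p(x, T_n = 1) / (2√2)` as soon as
`x̄² ≤ 1/2`. By the strong law of large numbers `x̄ → 0` almost surely. -/

open ProbabilityTheory

lemma stdNormalPDF_pos (u : ℝ) : 0 < stdNormalPDF u := by
  unfold stdNormalPDF; positivity

lemma clusterMarginal_pos {n : ℕ} (x : Fin n → ℝ) (S : Finset (Fin n)) :
    0 < clusterMarginal x S := by
  have : 0 < ∏ j ∈ S, stdNormalPDF (x j) := prod_pos fun j _ => stdNormalPDF_pos (x j)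
  unfold clusterMarginal
  positivity

lemma crpWeight_nonneg {n t : ℕ} (A : Fin t → Finset (Fin n)) : 0 ≤ crpWeight A := by
  unfold crpWeight; positivity

lemma pJoint_nonneg (n t : ℕ) (x : Fin n → ℝ) : 0 ≤ pJoint n t x :=
  sum_nonneg fun A _ => mul_nonneg (crpWeight_nonneg A)
    (prod_nonneg fun i _ => (clusterMarginal_pos x (A i)).le)

lemma posteriorOne_nonneg (n : ℕ) (x : Fin n → ℝ) : 0 ≤ posteriorOne n x :=
  div_nonneg (pJoint_nonneg n 1 x) (sum_nonneg fun t _ => pJoint_nonneg n t x)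

lemma clusterMarginal_le_erase_mul_singleton {n : ℕ} (x : Fin n → ℝ) {S : Finset (Fin n)}
    {j : Fin n} (hj : j ∈ S) :
    (Real.sqrt 2)⁻¹ * Real.exp (-((∑ i ∈ S, x i) / S.card) ^ 2) * clusterMarginal x S ≤
      clusterMarginal x (S.erase j) * clusterMarginal x {j} := by
  have hcard : ((S.erase j).card : ℝ) + 1 = S.card := by
    rw [card_erase_of_mem hj, Nat.cast_pred (card_pos.2 ⟨j, hj⟩), sub_add_cancel]
  have hk : (0 : ℝ) < S.card := Nat.cast_pos.2 (card_pos.2 ⟨j, hj⟩)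
  simp only [clusterMarginal, hcard, card_singleton, sum_singleton, prod_singleton,
    sum_erase_eq_sub hj, ← prod_erase_mul S _ hj]
  set k : ℝ := ↑S.card
  set t := ∑ i ∈ S, x i
  set a := x j
  set P := ∏ i ∈ S.erase j, stdNormalPDF (x i)
  have hP : 0 < P * stdNormalPDF a :=
    mul_pos (prod_pos fun i _ => stdNormalPDF_pos _) (stdNormalPDF_pos a)
  -- completing the square in `a`
  have hexp : t ^ 2 / (2 * (k + 1)) - (t / k) ^ 2 ≤ (t - a) ^ 2 / (2 * k) + a ^ 2 / 4 := by
    have h1 : t ^ 2 / (2 * (k + 1)) ≤ t ^ 2 / (2 * k) := by gcongr; linarith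
    have h2 : (t - a) ^ 2 / (2 * k) = t ^ 2 / (2 * k) - t * a / k + a ^ 2 / (2 * k) := by
      field_simp; ring
    have h3 : (a / 2 - t / k) ^ 2 = a ^ 2 / 4 - t * a / k + (t / k) ^ 2 := by ring
    have h4 : 0 ≤ a ^ 2 / (2 * k) := by positivity
    linarith [sq_nonneg (a / 2 - t / k)]
  calc (Real.sqrt 2)⁻¹ * Real.exp (-(t / k) ^ 2) *
        ((Real.sqrt (k + 1))⁻¹ * (P * stdNormalPDF a) * Real.exp (t ^ 2 / (2 * (k + 1))))
      = (Real.sqrt 2)⁻¹ * (P * stdNormalPDF a) * (Real.sqrt (k + 1))⁻¹ *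
          Real.exp (t ^ 2 / (2 * (k + 1)) - (t / k) ^ 2) := by
        rw [sub_eq_add_neg, Real.exp_add]; ring
    _ ≤ (Real.sqrt 2)⁻¹ * (P * stdNormalPDF a) * (Real.sqrt k)⁻¹ *
          Real.exp ((t - a) ^ 2 / (2 * k) + a ^ 2 / 4) := by
        gcongr; linarith
    _ = _ := by
        rw [Real.exp_add]; norm_num; ring

lemma orderedPartitions_one {n : ℕ} (hn : n ≠ 0) :
    orderedPartitions n 1 = {fun _ => univ} := by
  ext A
  simp only [orderedPartitions, mem_filter, mem_univ, true_and, mem_singleton,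
    univ_unique, singleton_biUnion]
  constructor
  · rintro ⟨-, -, hA⟩
    exact funext fun i => Subsingleton.elim default i ▸ hA
  · rintro rfl
    exact ⟨fun _ => univ_nonempty_iff.2 ⟨⟨0, Nat.pos_of_ne_zero hn⟩⟩,
      fun i j hij => absurd (Subsingleton.elim i j) hij, rfl⟩

lemma pJoint_one {n : ℕ} (hn : n ≠ 0) (x : Fin n → ℝ) :
    pJoint n 1 x = clusterMarginal x univ / n := by
  rw [pJoint, orderedPartitions_one hn, sum_singleton, crpWeight, ← Nat.mul_factorial_pred hn]
  simp only [Fin.prod_univ_one, card_univ, Fintype.card_fin, Nat.factorial_one]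
  have : ((n - 1).factorial : ℝ) ≠ 0 := by positivity
  push_cast
  field_simp

def singletonSplit {n : ℕ} (j : Fin n) (b : Fin 2) : Fin 2 → Finset (Fin n) :=
  fun i => if i = b then {j} else univ.erase j

lemma singletonSplit_mem {n : ℕ} (hn : 2 ≤ n) (j : Fin n) (b : Fin 2) :
    singletonSplit j b ∈ orderedPartitions n 2 := by
  have hne : (univ.erase j).Nonempty := by
    rw [← card_pos, card_erase_of_mem (mem_univ j), card_univ, Fintype.card_fin]; omega
  simp only [orderedPartitions, mem_filter, mem_univ, true_and, singletonSplit]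
  refine ⟨fun i => ?_, fun i i' hii' => ?_, eq_univ_of_forall fun a => ?_⟩
  · split_ifs <;> simp [hne]
  · split_ifs with hi hi' hi'
    · exact absurd (hi.trans hi'.symm) hii'
    · exact disjoint_singleton_left.2 (notMem_erase j univ)
    · exact disjoint_singleton_right.2 (notMem_erase j univ)
    · fin_cases b <;> fin_cases i <;> fin_cases i' <;> simp_all
  · rw [mem_biUnion]
    by_cases ha : a = j
    · exact ⟨b, mem_univ _, by simp [singletonSplit, ha]⟩
    · refine ⟨b + 1, mem_univ _, ?_⟩
      fin_cases b <;> simp [singletonSplit, ha]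

lemma singletonSplit_injective {n : ℕ} (hn : 3 ≤ n) :
    Function.Injective fun p : Fin n × Fin 2 => singletonSplit p.1 p.2 := by
  rintro ⟨j, b⟩ ⟨j', b'⟩ h
  have hb := congrFun h b
  dsimp only [singletonSplit] at hb
  rw [if_pos rfl] at hb
  split_ifs at hb with hbb'
  · rw [singleton_inj.1 hb, hbb']
  · have := congrArg card hb
    rw [card_singleton, card_erase_of_mem (mem_univ j'), card_univ, Fintype.card_fin] at this
    omega

lemma crpWeight_singletonSplit {n : ℕ} (hn : 2 ≤ n) (j : Fin n) (b : Fin 2) :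
    crpWeight (singletonSplit j b) = 1 / (2 * n * (n - 1)) := by
  obtain ⟨m, rfl⟩ : ∃ m, n = m + 2 := ⟨n - 2, by omega⟩
  have hfac : ((m + 2).factorial : ℝ) = (m + 2) * (m + 1) * m.factorial := by
    rw [Nat.factorial_succ, Nat.factorial_succ]; push_cast; ring
  have : (m.factorial : ℝ) ≠ 0 := by positivity
  have : (m : ℝ) + 1 ≠ 0 := by positivity
  rw [crpWeight, Fin.prod_univ_two, hfac]
  fin_cases b <;>
  · simp only [singletonSplit]
    norm_num
    rw [show (m : ℝ) + 2 - 1 = m + 1 by ring]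
    field_simp

lemma prod_clusterMarginal_singletonSplit {n : ℕ} (x : Fin n → ℝ) (j : Fin n) (b : Fin 2) :
    ∏ i, clusterMarginal x (singletonSplit j b i) =
      clusterMarginal x (univ.erase j) * clusterMarginal x {j} := by
  rw [Fin.prod_univ_two]
  fin_cases b <;> simp [singletonSplit, mul_comm]

lemma sum_clusterMarginal_erase_mul_singleton_le_pJoint_two {n : ℕ} (hn : 3 ≤ n)
    (x : Fin n → ℝ) :
    (∑ j, clusterMarginal x (univ.erase j) * clusterMarginal x {j}) / (n * (n - 1)) ≤
      pJoint n 2 x := by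
  have hn3 : (3 : ℝ) ≤ n := by exact_mod_cast hn
  have hn0 : (n : ℝ) ≠ 0 := by linarith
  have hn1 : (n : ℝ) - 1 ≠ 0 := by linarith
  calc (∑ j, clusterMarginal x (univ.erase j) * clusterMarginal x {j}) / (n * (n - 1))
      = ∑ p : Fin n × Fin 2, crpWeight (singletonSplit p.1 p.2) *
          ∏ i, clusterMarginal x (singletonSplit p.1 p.2 i) := by
        simp only [crpWeight_singletonSplit (by omega : 2 ≤ n),
          prod_clusterMarginal_singletonSplit, Fintype.sum_prod_type, sum_const, card_univ,
          Fintype.card_fin, sum_div]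
        refine sum_congr rfl fun j _ => ?_
        rw [nsmul_eq_mul, Nat.cast_ofNat]
        field_simp
    _ = ∑ A ∈ univ.image fun p : Fin n × Fin 2 => singletonSplit p.1 p.2,
          crpWeight A * ∏ i, clusterMarginal x (A i) := by
        rw [sum_image fun p _ q _ h => singletonSplit_injective hn h]
    _ ≤ pJoint n 2 x :=
        sum_le_sum_of_subset_of_nonneg
          (image_subset_iff.2 fun p _ => singletonSplit_mem (by omega) p.1 p.2)
          fun A _ _ => mul_nonneg (crpWeight_nonneg A)
            (prod_nonneg fun i _ => (clusterMarginal_pos x (A i)).le)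

lemma pJoint_two_ge_of_sq_average_le {n : ℕ} (hn : 3 ≤ n) (x : Fin n → ℝ)
    (hx : ((∑ j, x j) / n) ^ 2 ≤ 1 / 2) :
    1 / (2 * Real.sqrt 2) * pJoint n 1 x ≤ pJoint n 2 x := by
  have hn3 : (3 : ℝ) ≤ n := by exact_mod_cast hn
  set c := 1 / (2 * Real.sqrt 2) * clusterMarginal x univ
  have hc : 0 < c := by have := clusterMarginal_pos x univ; positivity
  have hsplit : ∀ j, c ≤ clusterMarginal x (univ.erase j) * clusterMarginal x {j} := by
    intro j
    have := clusterMarginal_pos x univ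
    have hexp : 1 / 2 ≤ Real.exp (-((∑ i, x i) / (univ : Finset (Fin n)).card) ^ 2) := by
      rw [card_univ, Fintype.card_fin]
      linarith [Real.add_one_le_exp (-((∑ i, x i) / n) ^ 2)]
    calc c = (Real.sqrt 2)⁻¹ * (1 / 2) * clusterMarginal x univ := by simp only [c]; ring
      _ ≤ _ := by gcongr
      _ ≤ _ := clusterMarginal_le_erase_mul_singleton x (mem_univ j)
  calc 1 / (2 * Real.sqrt 2) * pJoint n 1 x = c / n := by
        rw [pJoint_one (by omega)]; ring
    _ ≤ c / (n - 1) := by gcongr <;> linarith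
    _ = n * c / (n * (n - 1)) := by field_simp
    _ ≤ (∑ j, clusterMarginal x (univ.erase j) * clusterMarginal x {j}) / (n * (n - 1)) := by
        gcongr
        · nlinarith
        · simpa using card_nsmul_le_sum univ _ c fun j _ => hsplit j
    _ ≤ pJoint n 2 x := sum_clusterMarginal_erase_mul_singleton_le_pJoint_two hn x

lemma posteriorOne_le_of_mul_le_pJoint_two {n : ℕ} (hn : 2 ≤ n) {x : Fin n → ℝ} {k : ℝ}
    (hk : 0 ≤ k) (h : k * pJoint n 1 x ≤ pJoint n 2 x) :
    posteriorOne n x ≤ 1 / (1 + k) := by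
  have h1 : 0 < pJoint n 1 x := by
    rw [pJoint_one (by omega)]
    exact div_pos (clusterMarginal_pos x univ) (by exact_mod_cast (by omega : 0 < n))
  have hD : pJoint n 1 x + pJoint n 2 x ≤ ∑ t ∈ Icc 1 n, pJoint n t x := by
    rw [← sum_pair (f := fun t => pJoint n t x) (by norm_num : (1 : ℕ) ≠ 2)]
    refine sum_le_sum_of_subset_of_nonneg (fun t ht => ?_) fun t _ _ => pJoint_nonneg n t x
    simp only [mem_insert, mem_singleton] at ht
    rw [mem_Icc]; omega
  have h2 := pJoint_nonneg n 2 x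
  rw [posteriorOne, div_le_div_iff₀ (by linarith) (by linarith)]
  nlinarith

lemma eventually_posteriorOne_le_of_tendsto_average {x : ℕ → ℝ}
    (hx : Tendsto (fun n : ℕ => (∑ i ∈ range n, x i) / n) atTop (nhds 0)) :
    ∀ᶠ n : ℕ in atTop,
      posteriorOne n (fun i : Fin n => x i) ≤ 1 / (1 + 1 / (2 * Real.sqrt 2)) := by
  have hsq : ∀ᶠ n : ℕ in atTop, ((∑ i ∈ range n, x i) / n) ^ 2 < 1 / 2 := by
    have := hx.pow 2
    rw [zero_pow two_ne_zero] at this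
    exact this.eventually (eventually_lt_nhds (by norm_num))
  filter_upwards [hsq, eventually_ge_atTop 3] with n hn h3
  refine posteriorOne_le_of_mul_le_pJoint_two (by omega) (by positivity)
    (pJoint_two_ge_of_sq_average_le h3 _ ?_)
  rw [Fin.sum_univ_eq_sum_range (fun i => x i) n]
  exact hn.le

lemma ae_tendsto_average_of_iIndepFun_gaussianReal {Ω : Type*} [MeasurableSpace Ω]
    {μ : Measure Ω} {X : ℕ → Ω → ℝ} (hmeas : ∀ i, Measurable (X i)) (hindep : iIndepFun X μ)
    {m : ℝ} {v : NNReal} (hdist : ∀ i, μ.map (X i) = gaussianReal m v) :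
    ∀ᵐ ω ∂μ, Tendsto (fun n : ℕ => (∑ i ∈ range n, X i ω) / n) atTop (nhds m) := by
  have hint : Integrable (X 0) μ :=
    (integrable_map_measure aestronglyMeasurable_id (hmeas 0).aemeasurable).1
      (by rw [hdist 0]; exact (memLp_id_gaussianReal 1).integrable le_rfl)
  have hmean : μ[X 0] = m := by
    rw [← integral_id_gaussianReal (μ := m) (v := v), ← hdist 0]
    exact (integral_map (hmeas 0).aemeasurable aestronglyMeasurable_id).symm
  exact hmean ▸ strong_law_ae_real X hint (fun i j hij => hindep.indepFun hij)
    fun i => ⟨(hmeas i).aemeasurable, (hmeas 0).aemeasurable, by rw [hdist, hdist]⟩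

theorem posterior_one_not_consistent_general {Ω : Type*} [MeasurableSpace Ω]
    (μ : Measure Ω) (X : ℕ → Ω → ℝ)
    (hmeas : ∀ i, Measurable (X i))
    (hindep : ProbabilityTheory.iIndepFun X μ)
    (hdist : ∀ i, Measure.map (X i) μ = ProbabilityTheory.gaussianReal 0 1) :
    1 / (1 + 1 / (2 * Real.sqrt 2)) < 1 ∧
    ∀ᵐ ω ∂μ,
      ¬ Tendsto (fun n : ℕ => posteriorOne n fun i : Fin n => X i ω) atTop (nhds 1) ∧
      Filter.limsup (fun n : ℕ => posteriorOne n fun i : Fin n => X i ω) atTop ≤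
        1 / (1 + 1 / (2 * Real.sqrt 2)) := by
  have hbound : 1 / (1 + 1 / (2 * Real.sqrt 2)) < 1 := by
    rw [div_lt_one (by positivity)]
    exact lt_add_of_pos_right 1 (by positivity)
  refine ⟨hbound, ?_⟩
  filter_upwards [ae_tendsto_average_of_iIndepFun_gaussianReal hmeas hindep hdist] with ω hω
  have hev := eventually_posteriorOne_le_of_tendsto_average hω
  refine ⟨fun hlim => ?_,
    limsup_le_of_le (isCoboundedUnder_le_of_le atTop fun n => posteriorOne_nonneg n _) hev⟩
  obtain ⟨n, hle, hgt⟩ := (hev.and (hlim.eventually (eventually_gt_nhds hbound))).exists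
  linarith

/-- (Proposition) If `X₁, X₂, …` are i.i.d. `N(0,1)`, then almost surely the posterior
probability `p(T_n = 1 | X_{1:n})` under the standard normal DPM with `α = 1` does not
converge to `1`; indeed, almost surely
`limsup_n p(T_n = 1 | X_{1:n}) ≤ 1/(1 + 1/(2√2)) < 1`. -/
theorem posterior_one_not_consistent {Ω : Type*} [MeasurableSpace Ω]
    (μ : Measure Ω) [IsProbabilityMeasure μ] (X : ℕ → Ω → ℝ)
    (hmeas : ∀ i, Measurable (X i))
    (hindep : ProbabilityTheory.iIndepFun X μ)
    (hdist : ∀ i, Measure.map (X i) μ = ProbabilityTheory.gaussianReal 0 1) :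
    1 / (1 + 1 / (2 * Real.sqrt 2)) < 1 ∧
    ∀ᵐ ω ∂μ,
      ¬ Tendsto (fun n : ℕ => posteriorOne n fun i : Fin n => X i ω) atTop (nhds 1) ∧
      Filter.limsup (fun n : ℕ => posteriorOne n fun i : Fin n => X i ω) atTop ≤
        1 / (1 + 1 / (2 * Real.sqrt 2)) :=
  posterior_one_not_consistent_general μ X hmeas hindep hdist
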